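/- arXiv:1604.05896 — 2 statements merged into one kernel-verified Lean document; each statement's English description precedes it below -/
import Mathlib

section
/- Let B be a k×d random matrix with i.i.d. N(0,1) entries, a>0, P = a BᵀB. Then for all non-random u, v ∈ ℝᵈ, the expected sample covariance satisfies E[C_{Pu,Pv}] = a²·k·(d+k)·C_{u,v} + a²·k·d·μ_u μ_v, where C_{x,y} = (1/(d−1))Σ_m (x_m − μ_x)(y_m − μ_y). -/
open MeasureTheory ProbabilityTheory BigOperators Matrix

noncomputable def sampleMean {d : ℕ} (x : Fin d → ℝ) : ℝ := (∑ m, x m) / d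

noncomputable def sampleCov {d : ℕ} (x y : Fin d → ℝ) : ℝ :=
  (∑ m, (x m - sampleMean x) * (y m - sampleMean y)) / ((d : ℝ) - 1)

noncomputable def proj {k d : ℕ} (a : ℝ) (B : Matrix (Fin k) (Fin d) ℝ)
    (u : Fin d → ℝ) : Fin d → ℝ := a • (Bᵀ * B).mulVec u

/-!
Write `G = BᵀB`, so that `P u = a • G u`, and let `H = I - J / d` be the centering matrix, for which
`(d - 1) C_{x,y} = x ⬝ H y = x ⬝ y - d μ_x μ_y`. Independence of the entries turns
`E[B_{jm} B_{jn} B_{j'p} B_{j'q}]` into a product of one-dimensional Gaussian moments; with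
`E x⁴ = 3`, from the recursion `E x^(n+2) = (n+1) E x^n` (an integration by parts), this is Wick's
formula. Summing over the rows gives
`E[G_{mn} G_{pq}] = k² δ_{mn} δ_{pq} + k (δ_{mp} δ_{nq} + δ_{mq} δ_{np})`, hence
`E[(G u) ⬝ M (G v)] = k² u ⬝ M v + k tr(M) u ⬝ v + k v ⬝ M u` for every matrix `M`.
Taking `M = H`, which has trace `d - 1`, gives the claim.
-/

section SampleStatistics

variable {d : ℕ}

lemma sum_eq_card_mul_sampleMean (x : Fin d → ℝ) : ∑ m, x m = d * sampleMean x := by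
  rcases d.eq_zero_or_pos with rfl | hd
  · simp
  · rw [sampleMean, mul_div_cancel₀ _ (by positivity)]

lemma sampleMean_smul (a : ℝ) (x : Fin d → ℝ) : sampleMean (a • x) = a * sampleMean x := by
  simp only [sampleMean, Pi.smul_apply, smul_eq_mul, ← Finset.mul_sum, mul_div_assoc]

lemma sampleCov_smul_smul (a b : ℝ) (x y : Fin d → ℝ) :
    sampleCov (a • x) (b • y) = a * b * sampleCov x y := by
  simp only [sampleCov, sampleMean_smul, Pi.smul_apply, smul_eq_mul]
  rw [← mul_div_assoc, Finset.mul_sum]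
  congr 1
  exact Finset.sum_congr rfl fun m _ => by ring

lemma sampleCov_eq_dotProduct (x y : Fin d → ℝ) :
    sampleCov x y = (x ⬝ᵥ y - d * (sampleMean x * sampleMean y)) / (d - 1) := by
  have hx := sum_eq_card_mul_sampleMean x
  have hy := sum_eq_card_mul_sampleMean y
  simp only [sampleCov, dotProduct, sub_mul, mul_sub, Finset.sum_sub_distrib, ← Finset.sum_mul,
    ← Finset.mul_sum, hx, hy, Finset.sum_const, Finset.card_univ, Fintype.card_fin, nsmul_eq_mul]
  ring

noncomputable def centeringMatrix (d : ℕ) : Matrix (Fin d) (Fin d) ℝ :=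
  1 - (d : ℝ)⁻¹ • of fun _ _ => 1

lemma centeringMatrix_mulVec (y : Fin d → ℝ) :
    centeringMatrix d *ᵥ y = fun m => y m - sampleMean y := by
  rw [centeringMatrix, sub_mulVec, one_mulVec, smul_mulVec]
  ext m
  simp [mulVec, dotProduct, sampleMean, div_eq_inv_mul]

lemma dotProduct_centeringMatrix_mulVec (x y : Fin d → ℝ) :
    x ⬝ᵥ (centeringMatrix d *ᵥ y) = x ⬝ᵥ y - d * (sampleMean x * sampleMean y) := by
  simp only [centeringMatrix_mulVec, dotProduct, mul_sub, Finset.sum_sub_distrib,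
    ← Finset.sum_mul, sum_eq_card_mul_sampleMean x]
  ring

lemma trace_centeringMatrix (hd : d ≠ 0) : (centeringMatrix d).trace = d - 1 := by
  simp [centeringMatrix, trace, hd]

end SampleStatistics

section GaussianMoments

open Real

lemma gaussianPDFReal_zero_one :
    gaussianPDFReal 0 1 = fun x => (√(2 * π))⁻¹ * exp (-(1 / 2) * x ^ 2) := by
  funext x
  simp only [gaussianPDFReal]
  push_cast
  ring_nf

lemma hasDerivAt_gaussianPDFReal_zero_one (x : ℝ) :
    HasDerivAt (gaussianPDFReal 0 1) (-(x * gaussianPDFReal 0 1 x)) x := by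
  rw [gaussianPDFReal_zero_one]
  refine ((((hasDerivAt_pow 2 x).const_mul (-(1 / 2))).exp).const_mul
    (√(2 * π))⁻¹).congr_deriv ?_
  push_cast
  ring

lemma integrable_gaussianPDFReal_mul_pow (n : ℕ) :
    Integrable fun x => gaussianPDFReal 0 1 x * x ^ n := by
  have h := (integrable_rpow_mul_exp_neg_mul_sq (b := 1 / 2) (by norm_num)
    (neg_one_lt_zero.trans_le n.cast_nonneg)).const_mul (√(2 * π))⁻¹
  refine h.congr (ae_of_all _ fun x => ?_)
  simp only [gaussianPDFReal_zero_one, rpow_natCast]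
  ring

lemma integral_pow_add_two_gaussianReal (n : ℕ) :
    ∫ x, x ^ (n + 2) ∂gaussianReal 0 1 = (n + 1) * ∫ x, x ^ n ∂gaussianReal 0 1 := by
  simp only [integral_gaussianReal_eq_integral_smul one_ne_zero, smul_eq_mul]
  have hint := integrable_gaussianPDFReal_mul_pow
  have ibp := integral_mul_deriv_eq_deriv_mul_of_integrable
    (u := fun x => x ^ (n + 1)) (u' := fun x => (n + 1 : ℝ) * x ^ n)
    (v := gaussianPDFReal 0 1) (v' := fun x => -(x * gaussianPDFReal 0 1 x))
    (fun x _ => by simpa using hasDerivAt_pow (n + 1) x)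
    (fun x _ => hasDerivAt_gaussianPDFReal_zero_one x)
    ((hint (n + 2)).neg.congr
      (ae_of_all _ fun x => by simp only [Pi.mul_apply, Pi.neg_apply]; ring))
    (((hint n).const_mul (n + 1)).congr (ae_of_all _ fun x => by simp only [Pi.mul_apply]; ring))
    ((hint (n + 1)).congr (ae_of_all _ fun x => by simp only [Pi.mul_apply]; ring))
  simp only [mul_neg, integral_neg, neg_inj] at ibp
  rw [← integral_const_mul]
  convert ibp using 1 <;> congr 1 <;> funext x <;> ring

end GaussianMoments

lemma prod_moment_count_eq_pairings {ι : Type*} [Fintype ι] [DecidableEq ι] (m : ℕ → ℝ)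
    (h0 : m 0 = 1) (h1 : m 1 = 0) (h2 : m 2 = 1) (h3 : m 3 = 0) (h4 : m 4 = 3) (p q r s : ι) :
    ∏ i, m (Multiset.count i {p, q, r, s})
      = (if p = q then 1 else 0) * (if r = s then 1 else 0)
        + (if p = r then 1 else 0) * (if q = s then 1 else 0)
        + (if p = s then 1 else 0) * (if q = r then 1 else 0) := by
  rw [← Finset.prod_subset (Finset.subset_univ {p, q, r, s}) fun i _ hi => by
    simp_all [eq_comm]]
  by_cases hpq : p = q <;> by_cases hpr : p = r <;> by_cases hps : p = s <;>
    by_cases hqr : q = r <;> by_cases hqs : q = s <;> by_cases hrs : r = s <;>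
    simp_all [eq_comm, one_add_one_eq_two, two_add_one_eq_three]

lemma transpose_mul_self_apply_mul_apply {κ ι : Type*} [Fintype κ] (A : Matrix κ ι ℝ)
    (m n p q : ι) :
    (Aᵀ * A) m n * (Aᵀ * A) p q = ∑ j, ∑ j', A j m * A j n * A j' p * A j' q := by
  simp only [mul_apply, transpose_apply, Finset.sum_mul_sum]
  exact Finset.sum_congr rfl fun j _ => Finset.sum_congr rfl fun j' _ => by ring

lemma mulVec_apply_mul_mulVec_apply {ι : Type*} [Fintype ι] (G : Matrix ι ι ℝ) (u v : ι → ℝ)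
    (m p : ι) :
    (G *ᵥ u) m * (G *ᵥ v) p = ∑ n, ∑ q, u n * v q * (G m n * G p q) := by
  simp only [mulVec, dotProduct, Finset.sum_mul_sum]
  exact Finset.sum_congr rfl fun n _ => Finset.sum_congr rfl fun q _ => by ring

lemma dotProduct_mulVec_eq_sum {ι : Type*} [Fintype ι] (M : Matrix ι ι ℝ) (x y : ι → ℝ) :
    x ⬝ᵥ (M *ᵥ y) = ∑ m, ∑ p, M m p * (x m * y p) := by
  simp only [mulVec, dotProduct, Finset.mul_sum]
  exact Finset.sum_congr rfl fun m _ => Finset.sum_congr rfl fun p _ => by ring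

section Wick

variable {Ω ι : Type*} [MeasurableSpace Ω] {μ : Measure Ω} {X : ι → Ω → ℝ}

lemma memLp_of_map_eq_gaussianReal {Y : Ω → ℝ} (hY : μ.map Y = gaussianReal 0 1)
    (p : ENNReal) (hp : p ≠ ⊤) : MemLp Y p μ := by
  have hm : AEMeasurable Y μ := .of_map_ne_zero (by simp [hY, NeZero.ne])
  have := memLp_id_gaussianReal' (μ := 0) (v := 1) p hp
  rw [← hY] at this
  exact (memLp_map_measure_iff (by simpa using this.1) hm).1 this

lemma integrable_mul_mul_mul_of_map_eq_gaussianReal (hX : ∀ i, μ.map (X i) = gaussianReal 0 1)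
    (p q r s : ι) : Integrable (fun ω => X p ω * X q ω * X r ω * X s ω) μ := by
  have h := MemLp.prod' (s := Finset.univ) (f := fun j : Fin 4 => X (![p, q, r, s] j))
    (p := fun _ => 4) (μ := μ) fun j _ => memLp_of_map_eq_gaussianReal (hX _) 4 (by simp)
  rw [← memLp_one_iff_integrable]
  convert h using 1
  · funext ω
    simp [Fin.prod_univ_four]
  · simp [ENNReal.mul_inv_cancel]

lemma integral_mul_mul_mul_of_iIndepFun_gaussianReal [Fintype ι] [DecidableEq ι]
    (hindep : iIndepFun X μ) (hX : ∀ i, μ.map (X i) = gaussianReal 0 1) (p q r s : ι) :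
    ∫ ω, X p ω * X q ω * X r ω * X s ω ∂μ
      = (if p = q then 1 else 0) * (if r = s then 1 else 0)
        + (if p = r then 1 else 0) * (if q = s then 1 else 0)
        + (if p = s then 1 else 0) * (if q = r then 1 else 0) := by
  have hm : ∀ i, AEMeasurable (X i) μ := fun i => .of_map_ne_zero (by simp [hX, NeZero.ne])
  have hmoment : ∀ i n, ∫ ω, X i ω ^ n ∂μ = ∫ x, x ^ n ∂gaussianReal 0 1 := fun i n => by
    rw [← hX i, integral_map (hm i) (by fun_prop)]
  have hprod : ∀ ω, X p ω * X q ω * X r ω * X s ω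
      = ∏ i, X i ω ^ Multiset.count i {p, q, r, s} := by
    intro ω
    simp only [Multiset.insert_eq_cons, Multiset.count_cons, Multiset.count_singleton, pow_add,
      Finset.prod_mul_distrib, pow_ite, pow_one, pow_zero, Finset.prod_ite_eq', Finset.mem_univ,
      if_true]
    ring
  simp_rw [hprod]
  rw [hindep.integral_fun_prod_comp (f := fun i x => x ^ Multiset.count i {p, q, r, s}) hm
    fun i => by fun_prop]
  simp_rw [hmoment]
  have m0 : ∫ x, x ^ 0 ∂gaussianReal 0 1 = 1 := by simp
  have m1 : ∫ x, x ^ 1 ∂gaussianReal 0 1 = 0 := by simp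
  have m2 : ∫ x, x ^ 2 ∂gaussianReal 0 1 = 1 := by
    simpa [m0] using integral_pow_add_two_gaussianReal 0
  have m3 : ∫ x, x ^ 3 ∂gaussianReal 0 1 = 0 := by
    simpa [m1] using integral_pow_add_two_gaussianReal 1
  have m4 : ∫ x, x ^ 4 ∂gaussianReal 0 1 = 3 := by
    rw [integral_pow_add_two_gaussianReal 2, m2]; norm_num
  exact prod_moment_count_eq_pairings (fun n => ∫ x, x ^ n ∂gaussianReal 0 1)
    m0 m1 m2 m3 m4 p q r s

end Wick

section Gram

variable {Ω ι κ : Type*} [MeasurableSpace Ω] {μ : Measure Ω} [Fintype κ]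
  {B : Ω → Matrix κ ι ℝ}

lemma integrable_transpose_mul_self_apply_mul_apply
    (hB : ∀ j m, μ.map (fun ω => B ω j m) = gaussianReal 0 1) (m n p q : ι) :
    Integrable (fun ω => ((B ω)ᵀ * B ω) m n * ((B ω)ᵀ * B ω) p q) μ := by
  simp only [transpose_mul_self_apply_mul_apply]
  exact integrable_finsetSum _ fun j _ => integrable_finsetSum _ fun j' _ =>
    integrable_mul_mul_mul_of_map_eq_gaussianReal (X := fun (p : κ × ι) ω => B ω p.1 p.2)
      (fun p => hB p.1 p.2) (j, m) (j, n) (j', p) (j', q)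

variable [Fintype ι]

lemma integrable_mulVec_apply_mul_mulVec_apply
    (hB : ∀ j m, μ.map (fun ω => B ω j m) = gaussianReal 0 1) (u v : ι → ℝ) (m p : ι) :
    Integrable (fun ω => (((B ω)ᵀ * B ω) *ᵥ u) m * (((B ω)ᵀ * B ω) *ᵥ v) p) μ := by
  simp only [mulVec_apply_mul_mulVec_apply]
  exact integrable_finsetSum _ fun n _ => integrable_finsetSum _ fun q _ =>
    (integrable_transpose_mul_self_apply_mul_apply hB m n p q).const_mul _

variable [DecidableEq ι]

lemma integral_transpose_mul_self_apply_mul_apply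
    (hindep : iIndepFun (fun (p : κ × ι) ω => B ω p.1 p.2) μ)
    (hB : ∀ j m, μ.map (fun ω => B ω j m) = gaussianReal 0 1) (m n p q : ι) :
    ∫ ω, ((B ω)ᵀ * B ω) m n * ((B ω)ᵀ * B ω) p q ∂μ
      = Fintype.card κ ^ 2 * ((if m = n then 1 else 0) * (if p = q then 1 else 0))
        + Fintype.card κ * ((if m = p then 1 else 0) * (if n = q then 1 else 0)
          + (if m = q then 1 else 0) * (if n = p then 1 else 0)) := by
  classical
  have hX : ∀ x : κ × ι, μ.map (fun ω => B ω x.1 x.2) = gaussianReal 0 1 :=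
    fun x => hB x.1 x.2
  simp only [transpose_mul_self_apply_mul_apply]
  have hwick : ∀ j j', ∫ ω, B ω j m * B ω j n * B ω j' p * B ω j' q ∂μ
      = (if m = n then 1 else 0) * (if p = q then 1 else 0)
        + (if j = j' then 1 else 0) * ((if m = p then 1 else 0) * (if n = q then 1 else 0)
          + (if m = q then 1 else 0) * (if n = p then 1 else 0)) := fun j j' => by
    rw [integral_mul_mul_mul_of_iIndepFun_gaussianReal hindep hX (j, m) (j, n) (j', p) (j', q)]
    by_cases hj : j = j'
    · subst hj
      simp only [Prod.mk.injEq, true_and, if_true]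
      ring
    · simp only [Prod.mk.injEq, true_and, hj, false_and, if_false, zero_mul, add_zero]
  have hint : ∀ j j', Integrable (fun ω => B ω j m * B ω j n * B ω j' p * B ω j' q) μ :=
    fun j j' => integrable_mul_mul_mul_of_map_eq_gaussianReal hX (j, m) (j, n) (j', p) (j', q)
  rw [integral_finsetSum _ fun j _ => integrable_finsetSum _ fun j' _ => hint j j']
  simp_rw [integral_finsetSum _ fun j' _ => hint _ j', hwick]
  simp only [Finset.sum_add_distrib, ite_mul, one_mul, zero_mul, Finset.sum_ite_eq,
    Finset.mem_univ, if_true, Finset.sum_const, Finset.card_univ, nsmul_eq_mul]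
  ring

lemma integral_mulVec_apply_mul_mulVec_apply
    (hindep : iIndepFun (fun (p : κ × ι) ω => B ω p.1 p.2) μ)
    (hB : ∀ j m, μ.map (fun ω => B ω j m) = gaussianReal 0 1) (u v : ι → ℝ) (m p : ι) :
    ∫ ω, (((B ω)ᵀ * B ω) *ᵥ u) m * (((B ω)ᵀ * B ω) *ᵥ v) p ∂μ
      = Fintype.card κ ^ 2 * (u m * v p)
        + Fintype.card κ * ((if m = p then 1 else 0) * (u ⬝ᵥ v) + u p * v m) := by
  have hint := integrable_transpose_mul_self_apply_mul_apply hB (μ := μ)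
  simp only [mulVec_apply_mul_mulVec_apply]
  rw [integral_finsetSum _ fun n _ => integrable_finsetSum _ fun q _ => (hint m n p q).const_mul _]
  simp_rw [integral_finsetSum _ fun q _ => (hint m _ p q).const_mul _, integral_const_mul,
    integral_transpose_mul_self_apply_mul_apply hindep hB]
  simp only [mul_add, Finset.sum_add_distrib]
  congr 1
  · simp [mul_comm]
  congr 1
  · simp [dotProduct, Finset.mul_sum, mul_comm]
  · simp [mul_comm]

lemma integral_dotProduct_mulVec_transpose_mul_self
    (hindep : iIndepFun (fun (p : κ × ι) ω => B ω p.1 p.2) μ)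
    (hB : ∀ j m, μ.map (fun ω => B ω j m) = gaussianReal 0 1)
    (M : Matrix ι ι ℝ) (u v : ι → ℝ) :
    ∫ ω, (((B ω)ᵀ * B ω) *ᵥ u) ⬝ᵥ (M *ᵥ (((B ω)ᵀ * B ω) *ᵥ v)) ∂μ
      = Fintype.card κ ^ 2 * (u ⬝ᵥ (M *ᵥ v)) + Fintype.card κ * M.trace * (u ⬝ᵥ v)
        + Fintype.card κ * (v ⬝ᵥ (M *ᵥ u)) := by
  have hint := integrable_mulVec_apply_mul_mulVec_apply hB (μ := μ) u v
  simp only [dotProduct_mulVec_eq_sum M]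
  rw [integral_finsetSum
    (f := fun m ω => ∑ p, M m p * ((((B ω)ᵀ * B ω) *ᵥ u) m * (((B ω)ᵀ * B ω) *ᵥ v) p))
    _
    fun m _ => integrable_finsetSum _ fun p _ => (hint m p).const_mul _]
  simp_rw [integral_finsetSum _ fun p _ => (hint _ p).const_mul _, integral_const_mul,
    integral_mulVec_apply_mul_mulVec_apply hindep hB]
  have htrace :
      M.trace * (u ⬝ᵥ v) = ∑ m, ∑ p, M m p * ((if m = p then 1 else 0) * (u ⬝ᵥ v)) := by
    simp [trace, Finset.sum_mul]
  rw [mul_assoc _ M.trace, htrace]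
  simp only [Finset.mul_sum, ← Finset.sum_add_distrib]
  exact Finset.sum_congr rfl fun m _ => Finset.sum_congr rfl fun p _ => by ring

end Gram

theorem stmt6_general
    {Ω : Type} [MeasureSpace Ω]
    {k d : ℕ} (hd : 2 ≤ d)
    (B : Ω → Matrix (Fin k) (Fin d) ℝ)
    (hindep : iIndepFun
      (fun (p : Fin k × Fin d) ω => B ω p.1 p.2) ℙ)
    (hgauss : ∀ j m, Measure.map (fun ω => B ω j m) ℙ = gaussianReal 0 1)
    (a : ℝ) (u v : Fin d → ℝ) :
    ∫ ω, sampleCov (proj a (B ω) u) (proj a (B ω) v)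
      = a ^ 2 * k * (d + k) * sampleCov u v
        + a ^ 2 * k * d * (sampleMean u * sampleMean v) := by
  have hd0 : d ≠ 0 := by omega
  have hd1 : (d : ℝ) - 1 ≠ 0 := by
    have : (2 : ℝ) ≤ d := by exact_mod_cast hd
    linarith
  have hcov : ∀ ω, sampleCov (proj a (B ω) u) (proj a (B ω) v) = a ^ 2 / (d - 1) *
      (((B ω)ᵀ * B ω) *ᵥ u) ⬝ᵥ (centeringMatrix d *ᵥ (((B ω)ᵀ * B ω) *ᵥ v)) := by
    intro ω
    rw [proj, proj, sampleCov_smul_smul, sampleCov_eq_dotProduct,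
      ← dotProduct_centeringMatrix_mulVec]
    ring
  simp_rw [hcov]
  rw [integral_const_mul, integral_dotProduct_mulVec_transpose_mul_self hindep hgauss,
    trace_centeringMatrix hd0, dotProduct_centeringMatrix_mulVec,
    dotProduct_centeringMatrix_mulVec, sampleCov_eq_dotProduct, dotProduct_comm v u,
    Fintype.card_fin]
  field_simp
  ring

theorem stmt6
    {Ω : Type} [MeasureSpace Ω] [IsProbabilityMeasure (ℙ : Measure Ω)]
    {k d : ℕ} (hk : 1 ≤ k) (hd : 2 ≤ d)
    (B : Ω → Matrix (Fin k) (Fin d) ℝ)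
    (hmeas : ∀ j m, Measurable fun ω => B ω j m)
    (hindep : iIndepFun
      (fun (p : Fin k × Fin d) ω => B ω p.1 p.2) ℙ)
    (hgauss : ∀ j m, Measure.map (fun ω => B ω j m) ℙ = gaussianReal 0 1)
    (a : ℝ) (ha : 0 < a) (u v : Fin d → ℝ) :
    ∫ ω, sampleCov (proj a (B ω) u) (proj a (B ω) v)
      = a ^ 2 * k * (d + k) * sampleCov u v
        + a ^ 2 * k * d * (sampleMean u * sampleMean v) :=
  stmt6_general hd B hindep hgauss a u v
end

section
/- Let B_{jm} be i.i.d. real random variables with mean 0, variance c₂, and fourth cumulant c₄ (so E[B⁴] = 3c₂² + c₄). With P = a BᵀB, for all non-random u, v ∈ ℝᵈ and indices m, m′: Cov((Pu)_m, (Pv)_{m′}) = c₂² a² k ( 𝟙[m′=m](u·v) + u_{m′} v_m + b₄ 𝟙[m′=m] u_m v_m ), where b₄ = c₄/c₂². -/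
open MeasureTheory ProbabilityTheory BigOperators Matrix

/-!
Writing `(Pu)_m = a ∑_{j,n} u_n B_{jm} B_{jn}`, bilinearity reduces the covariance to the
covariances `Cov(B_p B_q, B_r B_s)` of products of two entries. For independent centred entries,
`E[B_p B_q B_r B_s]` vanishes as soon as one index occurs exactly once; otherwise the indices
pair up, giving `c₂² (δ_pq δ_rs + δ_pr δ_qs + δ_ps δ_qr) + c₄ δ_pqrs`. Subtracting
`E[B_p B_q] E[B_r B_s] = c₂² δ_pq δ_rs` and summing against the weights `u_n v_{n'}` leaves the
two pairings `(j,m) = (j',m'), (j,n) = (j',n')` and `(j,m) = (j',n'), (j,n) = (j',m')`, each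
contributing once per row `j`, plus the cumulant term.
-/

instance ENNReal.holderTriple_four_four_two : ENNReal.HolderTriple 4 4 2 where
  inv_add_inv_eq_inv := by
    rw [← ENNReal.add_halves 2⁻¹, ENNReal.div_eq_inv_mul, ← ENNReal.mul_inv (by simp) (by simp)]
    norm_num

lemma eq_or_pairs_of_forall_exists_eq {α : Type*} {p q r s : α} (hp : p = q ∨ p = r ∨ p = s)
    (hq : q = p ∨ q = r ∨ q = s) (hr : r = p ∨ r = q ∨ r = s) (hs : s = p ∨ s = q ∨ s = r) :
    (p = q ∧ q = r ∧ r = s) ∨ (p = q ∧ r = s ∧ p ≠ r) ∨ (p = r ∧ q = s ∧ p ≠ q) ∨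
      (p = s ∧ q = r ∧ p ≠ q) := by
  grind

namespace ProbabilityTheory.iIndepFun

variable {Ω ι : Type*} {mΩ : MeasurableSpace Ω} {μ : Measure Ω} {X : ι → Ω → ℝ}

lemma integral_mul_mul_mul_eq_zero (hindep : iIndepFun X μ)
    (hmeas : ∀ i, AEMeasurable (X i) μ) (hmean : ∀ i, ∫ ω, X i ω ∂μ = 0) {p q r t : ι}
    (hp : t ≠ p) (hq : t ≠ q) (hr : t ≠ r) :
    ∫ ω, X p ω * X q ω * X r ω * X t ω ∂μ = 0 := by
  classical
  have hdisj : Disjoint ({p, q, r} : Finset ι) {t} := by simp [hp, hq, hr]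
  have hφ : Measurable fun x : ({p, q, r} : Finset ι) → ℝ =>
      x ⟨p, by simp⟩ * x ⟨q, by simp⟩ * x ⟨r, by simp⟩ := by fun_prop
  have hψ : Measurable fun x : ({t} : Finset ι) → ℝ => x ⟨t, by simp⟩ := by fun_prop
  have hind : IndepFun (fun ω => X p ω * X q ω * X r ω) (X t) μ :=
    (hindep.indepFun_finset₀ _ _ hdisj hmeas).comp hφ hψ
  have hA : ∀ i, AEStronglyMeasurable (X i) μ := fun i => (hmeas i).aestronglyMeasurable
  rw [hind.integral_fun_mul_eq_mul_integral (((hA p).mul (hA q)).mul (hA r)) (hA t), hmean t,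
    mul_zero]

lemma integral_mul_eq_mul_ite [DecidableEq ι] (hindep : iIndepFun X μ)
    (hmeas : ∀ i, AEMeasurable (X i) μ) (hmean : ∀ i, ∫ ω, X i ω ∂μ = 0) {c₂ : ℝ}
    (hvar : ∀ i, ∫ ω, X i ω ^ 2 ∂μ = c₂) (i j : ι) :
    ∫ ω, X i ω * X j ω ∂μ = c₂ * if i = j then 1 else 0 := by
  split_ifs with h
  · subst h
    simpa only [sq, mul_one] using hvar i
  · rw [mul_zero, (hindep.indepFun h).integral_fun_mul_eq_mul_integral
      (hmeas i).aestronglyMeasurable (hmeas j).aestronglyMeasurable, hmean i, zero_mul]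

lemma integral_sq_mul_sq (hindep : iIndepFun X μ)
    (hmeas : ∀ i, AEMeasurable (X i) μ) {c₂ : ℝ} (hvar : ∀ i, ∫ ω, X i ω ^ 2 ∂μ = c₂) {i j : ι}
    (h : i ≠ j) :
    ∫ ω, X i ω ^ 2 * X j ω ^ 2 ∂μ = c₂ ^ 2 := by
  have hind : IndepFun (fun ω => X i ω ^ 2) (fun ω => X j ω ^ 2) μ :=
    (hindep.indepFun h).comp (measurable_id.pow_const 2) (measurable_id.pow_const 2)
  rw [hind.integral_fun_mul_eq_mul_integral ((hmeas i).pow_const 2).aestronglyMeasurable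
    ((hmeas j).pow_const 2).aestronglyMeasurable, hvar i, hvar j, sq]

lemma integral_mul_mul_mul_mul [DecidableEq ι] (hindep : iIndepFun X μ)
    (hmeas : ∀ i, AEMeasurable (X i) μ) (hmean : ∀ i, ∫ ω, X i ω ∂μ = 0) {c₂ c₄ : ℝ}
    (hvar : ∀ i, ∫ ω, X i ω ^ 2 ∂μ = c₂) (hfour : ∀ i, ∫ ω, X i ω ^ 4 ∂μ = 3 * c₂ ^ 2 + c₄)
    (p q r s : ι) :
    ∫ ω, X p ω * X q ω * X r ω * X s ω ∂μ =
      c₂ ^ 2 * ((if p = q then 1 else 0) * (if r = s then 1 else 0)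
        + (if p = r then 1 else 0) * (if q = s then 1 else 0)
        + (if p = s then 1 else 0) * (if q = r then 1 else 0))
      + c₄ * (if p = q ∧ q = r ∧ r = s then 1 else 0) := by
  by_cases hs : s ≠ p ∧ s ≠ q ∧ s ≠ r
  · rw [hindep.integral_mul_mul_mul_eq_zero hmeas hmean hs.1 hs.2.1 hs.2.2]
    simp [hs.1.symm, hs.2.1.symm, hs.2.2.symm]
  by_cases hr : r ≠ p ∧ r ≠ q ∧ r ≠ s
  · simp_rw [mul_right_comm _ (X r _) (X s _)]
    rw [hindep.integral_mul_mul_mul_eq_zero hmeas hmean hr.1 hr.2.1 hr.2.2]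
    simp [hr.1.symm, hr.2.1.symm, hr.2.2]
  by_cases hq : q ≠ p ∧ q ≠ r ∧ q ≠ s
  · simp_rw [show ∀ ω, X p ω * X q ω * X r ω * X s ω = X p ω * X r ω * X s ω * X q ω from
      fun ω => by ring]
    rw [hindep.integral_mul_mul_mul_eq_zero hmeas hmean hq.1 hq.2.1 hq.2.2]
    simp [hq.1.symm, hq.2.1, hq.2.2]
  by_cases hp : p ≠ q ∧ p ≠ r ∧ p ≠ s
  · simp_rw [show ∀ ω, X p ω * X q ω * X r ω * X s ω = X q ω * X r ω * X s ω * X p ω from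
      fun ω => by ring]
    rw [hindep.integral_mul_mul_mul_eq_zero hmeas hmean hp.1 hp.2.1 hp.2.2]
    simp [hp.1, hp.2.1, hp.2.2]
  obtain ⟨rfl, rfl, rfl⟩ | ⟨rfl, rfl, hpr⟩ | ⟨rfl, rfl, hpq⟩ | ⟨rfl, rfl, hpq⟩ :=
    eq_or_pairs_of_forall_exists_eq (p := p) (q := q) (r := r) (s := s)
      (by tauto) (by tauto) (by tauto) (by tauto)
  · simp_rw [show ∀ ω, X p ω * X p ω * X p ω * X p ω = X p ω ^ 4 from fun ω => by ring, hfour]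
    simp only [and_self, if_true]
    ring
  · simp_rw [show ∀ ω, X p ω * X p ω * X r ω * X r ω = X p ω ^ 2 * X r ω ^ 2 from
      fun ω => by ring, hindep.integral_sq_mul_sq hmeas hvar hpr]
    simp [hpr]
  · simp_rw [show ∀ ω, X p ω * X q ω * X p ω * X q ω = X p ω ^ 2 * X q ω ^ 2 from
      fun ω => by ring, hindep.integral_sq_mul_sq hmeas hvar hpq]
    simp [hpq]
  · simp_rw [show ∀ ω, X p ω * X q ω * X q ω * X p ω = X p ω ^ 2 * X q ω ^ 2 from
      fun ω => by ring, hindep.integral_sq_mul_sq hmeas hvar hpq]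
    simp [hpq]

lemma covariance_mul_mul [IsProbabilityMeasure μ] [DecidableEq ι] (hindep : iIndepFun X μ)
    (hL4 : ∀ i, MemLp (X i) 4 μ) (hmean : ∀ i, ∫ ω, X i ω ∂μ = 0) {c₂ c₄ : ℝ}
    (hvar : ∀ i, ∫ ω, X i ω ^ 2 ∂μ = c₂) (hfour : ∀ i, ∫ ω, X i ω ^ 4 ∂μ = 3 * c₂ ^ 2 + c₄)
    (p q r s : ι) :
    cov[fun ω => X p ω * X q ω, fun ω => X r ω * X s ω; μ] =
      c₂ ^ 2 * ((if p = r then 1 else 0) * (if q = s then 1 else 0)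
        + (if p = s then 1 else 0) * (if q = r then 1 else 0))
      + c₄ * (if p = q ∧ q = r ∧ r = s then 1 else 0) := by
  have hmeas : ∀ i, AEMeasurable (X i) μ := fun i => (hL4 i).aemeasurable
  rw [covariance_eq_sub ((hL4 q).mul' (hL4 p)) ((hL4 s).mul' (hL4 r))]
  simp only [Pi.mul_apply, ← mul_assoc]
  rw [hindep.integral_mul_mul_mul_mul hmeas hmean hvar hfour,
    hindep.integral_mul_eq_mul_ite hmeas hmean hvar,
    hindep.integral_mul_eq_mul_ite hmeas hmean hvar]
  ring

end ProbabilityTheory.iIndepFun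

lemma proj_apply {k d : ℕ} (a : ℝ) (B : Matrix (Fin k) (Fin d) ℝ) (u : Fin d → ℝ) (m : Fin d) :
    proj a B u m = ∑ p : Fin k × Fin d, a * u p.2 * (B p.1 m * B p.1 p.2) := by
  simp only [proj, Pi.smul_apply, smul_eq_mul, Matrix.mulVec, dotProduct, Matrix.mul_apply,
    Matrix.transpose_apply, Fintype.sum_prod_type, Finset.mul_sum, Finset.sum_mul]
  rw [Finset.sum_comm]
  exact Finset.sum_congr rfl fun j _ => Finset.sum_congr rfl fun n _ => by ring

lemma sum_sum_covariance_mul_mul_eq {k d : ℕ} (a c₂ c₄ : ℝ) (u v : Fin d → ℝ) (m m' : Fin d) :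
    ∑ p : Fin k × Fin d, ∑ q : Fin k × Fin d, a * u p.2 * (a * v q.2 *
      (c₂ ^ 2 * ((if (p.1, m) = (q.1, m') then 1 else 0) * (if p = q then 1 else 0)
        + (if (p.1, m) = q then 1 else 0) * (if p = (q.1, m') then 1 else 0))
      + c₄ * (if (p.1, m) = p ∧ p = (q.1, m') ∧ (q.1, m') = q then 1 else 0)))
    = a ^ 2 * k * (c₂ ^ 2 * ((if m' = m then 1 else 0) * ∑ n, u n * v n + u m' * v m)
        + c₄ * (if m' = m then 1 else 0) * (u m * v m)) := by
  simp only [Fintype.sum_prod_type, Prod.mk.injEq, true_and, ite_and, mul_ite, ite_mul, mul_zero,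
    zero_mul, mul_one, one_mul, mul_add, Finset.sum_add_distrib, Finset.sum_ite_eq,
    Finset.sum_ite_eq', Finset.mem_univ, if_true, Finset.sum_ite_irrel, Finset.sum_const_zero,
    Finset.sum_const, Finset.card_univ, Fintype.card_fin, nsmul_eq_mul]
  rcases eq_or_ne m' m with rfl | hm
  · have hsum : ∑ n, a * u n * (a * v n * c₂ ^ 2) = a ^ 2 * c₂ ^ 2 * ∑ n, u n * v n := by
      rw [Finset.mul_sum]
      exact Finset.sum_congr rfl fun n _ => by ring
    simp only [if_true, hsum]
    ring
  · simp only [hm, hm.symm, if_false]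
    ring

theorem stmt18_general
    {Ω : Type} [MeasureSpace Ω] [IsProbabilityMeasure (ℙ : Measure Ω)]
    {k d : ℕ}
    (B : Ω → Matrix (Fin k) (Fin d) ℝ)
    (hindep : iIndepFun
      (fun (p : Fin k × Fin d) ω => B ω p.1 p.2) ℙ)
    (hL4 : ∀ j m, MemLp (fun ω => B ω j m) 4 ℙ)
    (c₂ c₄ : ℝ) (hc₂ : 0 < c₂)
    (hmean : ∀ j m, ∫ ω, B ω j m = 0)
    (hvar : ∀ j m, ∫ ω, (B ω j m) ^ 2 = c₂)
    (hfour : ∀ j m, ∫ ω, (B ω j m) ^ 4 = 3 * c₂ ^ 2 + c₄)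
    (a : ℝ) (u v : Fin d → ℝ) (m m' : Fin d) :
    ∫ ω, (proj a (B ω) u m - ∫ ω', proj a (B ω') u m)
        * (proj a (B ω) v m' - ∫ ω', proj a (B ω') v m')
      = c₂ ^ 2 * a ^ 2 * k * ((if m' = m then (1 : ℝ) else 0) * (∑ n, u n * v n)
          + u m' * v m
          + (c₄ / c₂ ^ 2) * (if m' = m then (1 : ℝ) else 0) * (u m * v m)) := by
  have hcov : ∀ p q : Fin k × Fin d, cov[fun ω => B ω p.1 m * B ω p.1 p.2,
      fun ω => B ω q.1 m' * B ω q.1 q.2] = _ := fun p q =>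
    hindep.covariance_mul_mul (fun p => hL4 p.1 p.2) (fun p => hmean p.1 p.2)
      (fun p => hvar p.1 p.2) (fun p => hfour p.1 p.2) (p.1, m) p (q.1, m') q
  have hmemLp : ∀ (w : Fin d → ℝ) (n : Fin d) (p : Fin k × Fin d),
      MemLp (fun ω => a * w p.2 * (B ω p.1 n * B ω p.1 p.2)) 2 ℙ := fun w n p =>
    ((hL4 p.1 p.2).mul' (hL4 p.1 n)).const_mul _
  change cov[fun ω => proj a (B ω) u m, fun ω => proj a (B ω) v m'] = _
  simp_rw [proj_apply]
  rw [covariance_fun_sum_fun_sum (hmemLp u m) (hmemLp v m'),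
    Finset.sum_congr rfl fun p _ => Finset.sum_congr rfl fun q _ => by
      rw [covariance_const_mul_left, covariance_const_mul_right, hcov],
    sum_sum_covariance_mul_mul_eq]
  field_simp

theorem stmt18
    {Ω : Type} [MeasureSpace Ω] [IsProbabilityMeasure (ℙ : Measure Ω)]
    {k d : ℕ} (hk : 1 ≤ k) (hd : 2 ≤ d)
    (B : Ω → Matrix (Fin k) (Fin d) ℝ)
    (hmeas : ∀ j m, Measurable fun ω => B ω j m)
    (hindep : iIndepFun
      (fun (p : Fin k × Fin d) ω => B ω p.1 p.2) ℙ)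
    (hident : ∀ j m j' m', IdentDistrib (fun ω => B ω j m) (fun ω => B ω j' m') ℙ ℙ)
    (hL4 : ∀ j m, MemLp (fun ω => B ω j m) 4 ℙ)
    (c₂ c₄ : ℝ) (hc₂ : 0 < c₂)
    (hmean : ∀ j m, ∫ ω, B ω j m = 0)
    (hvar : ∀ j m, ∫ ω, (B ω j m) ^ 2 = c₂)
    (hfour : ∀ j m, ∫ ω, (B ω j m) ^ 4 = 3 * c₂ ^ 2 + c₄)
    (a : ℝ) (ha : 0 < a) (u v : Fin d → ℝ) (m m' : Fin d) :
    ∫ ω, (proj a (B ω) u m - ∫ ω', proj a (B ω') u m)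
        * (proj a (B ω) v m' - ∫ ω', proj a (B ω') v m')
      = c₂ ^ 2 * a ^ 2 * k * ((if m' = m then (1 : ℝ) else 0) * (∑ n, u n * v n)
          + u m' * v m
          + (c₄ / c₂ ^ 2) * (if m' = m then (1 : ℝ) else 0) * (u m * v m)) :=
  stmt18_general B hindep hL4 c₂ c₄ hc₂ hmean hvar hfour a u v m m'
end
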